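/- Let (G, M, I) be a formal context K, let A1, A2 ⊆ M, and let K1 be the context obtained from K by adjoining a new object g1 (not in G) whose intent is A1. Then the number of A2-crucial implications of K1 that are not A2-crucial implications of K is at most |A1 \ A2| + |A2 \ A1|, the cardinality of the symmetric difference of A1 and A2. -/

import Mathlib

/-!
Adjoining an object with intent `A1` adds only the set `A2 ∩ A1` to `C_{A2}` and can only shrink
closures. So an `A2`-crucial implication of the new context whose premise already lies in the old
`C_{A2}` is crucial in the old context as well, and every new one has premise `A2 ∩ A1`. Its
conclusion lies in `A2 \ A1` or in `(A2 ∩ A1)'' \ A2 ⊆ A1 \ A2`, the inclusion because the new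
object lies in the extent of `A2 ∩ A1`.
-/

namespace FCA

variable {G M : Type*}

/-- The intent `g'` of an object `g`: the set of attributes it has. -/
def intent [Fintype M] (I : G → M → Prop) [∀ g m, Decidable (I g m)] (g : G) : Finset M :=
  Finset.univ.filter (fun m => I g m)

/-- The extent `A'` of a set of attributes `A`. -/
def extent [Fintype G] (I : G → M → Prop) [∀ g m, Decidable (I g m)] (A : Finset M) :
    Finset G :=
  Finset.univ.filter (fun g => ∀ m ∈ A, I g m)

/-- The closure `A''` of a set of attributes `A`. -/
def closure [Fintype G] [Fintype M] (I : G → M → Prop) [∀ g m, Decidable (I g m)]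
    (A : Finset M) : Finset M :=
  Finset.univ.filter (fun m => ∀ g ∈ extent I A, I g m)

/-- `C_A = {A ∩ g' | g ∈ G}`. -/
def CA [Fintype G] [Fintype M] [DecidableEq M] (I : G → M → Prop) [∀ g m, Decidable (I g m)]
    (A : Finset M) : Finset (Finset M) :=
  Finset.univ.image (fun g => A ∩ intent I g)

/-- `MC_A`: the maximal elements of `C_A`. -/
def MCA [Fintype G] [Fintype M] [DecidableEq M] (I : G → M → Prop) [∀ g m, Decidable (I g m)]
    (A : Finset M) : Finset (Finset M) :=
  (CA I A).filter (fun B => ∀ C ∈ CA I A, ¬ B ⊂ C)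

/-- The set of `A`-crucial implications, encoded as pairs `(B, c)`:
`c ∈ B'' \ A` encodes the implication `B → c` and `c ∈ A \ B` encodes the
negative implication `B → c̄`. -/
def crucial [Fintype G] [Fintype M] [DecidableEq M] (I : G → M → Prop)
    [∀ g m, Decidable (I g m)] (A : Finset M) : Finset (Finset M × M) :=
  Finset.univ.filter
    (fun p => p.1 ∈ MCA I A ∧ p.2 ∈ (closure I p.1 \ A) ∪ (A \ p.1))

/-- The incidence relation of the context `K1` obtained from `(G, M, I)` by adjoining
a new object (represented by `none : Option G`) whose intent is `A1`. -/
def extRel (I : G → M → Prop) (A1 : Finset M) [DecidableEq M] : Option G → M → Prop :=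
  fun g m => g.elim (m ∈ A1) (fun h => I h m)

instance (I : G → M → Prop) [∀ g m, Decidable (I g m)] [DecidableEq M] (A1 : Finset M) :
    ∀ g m, Decidable (extRel I A1 g m) := fun g m => by
  cases g <;> unfold extRel <;> dsimp <;> infer_instance

lemma mem_crucial [Fintype G] [Fintype M] [DecidableEq M] {I : G → M → Prop}
    [∀ g m, Decidable (I g m)] {A : Finset M} {p : Finset M × M} :
    p ∈ crucial I A ↔ p.1 ∈ MCA I A ∧ p.2 ∈ (closure I p.1 \ A) ∪ (A \ p.1) := by
  simp [crucial]

lemma closure_subset_intent [Fintype G] [Fintype M] {I : G → M → Prop}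
    [∀ g m, Decidable (I g m)] {B : Finset M} {g : G} (hg : g ∈ extent I B) :
    closure I B ⊆ intent I g := by
  intro m hm
  simp only [closure, Finset.mem_filter, Finset.mem_univ, true_and] at hm
  simpa [intent] using hm g hg

section ExtRel

variable [DecidableEq M] {I : G → M → Prop} [∀ g m, Decidable (I g m)] {A1 : Finset M}

section Intent

variable [Fintype M]

@[simp]
lemma intent_extRel_none : intent (extRel I A1) none = A1 := by
  ext m; simp only [intent, Finset.mem_filter, Finset.mem_univ, true_and]; rfl

@[simp]
lemma intent_extRel_some (g : G) : intent (extRel I A1) (some g) = intent I g := by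
  ext m; simp only [intent, Finset.mem_filter, Finset.mem_univ, true_and]; rfl

end Intent

section Extent

variable [Fintype G]

lemma none_mem_extent_extRel {B : Finset M} :
    (none : Option G) ∈ extent (extRel I A1) B ↔ B ⊆ A1 := by
  simp only [extent, Finset.mem_filter, Finset.mem_univ, true_and]; rfl

lemma some_mem_extent_extRel {B : Finset M} {g : G} :
    some g ∈ extent (extRel I A1) B ↔ g ∈ extent I B := by
  simp only [extent, Finset.mem_filter, Finset.mem_univ, true_and]; rfl

end Extent

variable [Fintype G] [Fintype M]

lemma closure_extRel_subset (B : Finset M) : closure (extRel I A1) B ⊆ closure I B := by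
  intro m hm
  simp only [closure, Finset.mem_filter, Finset.mem_univ, true_and] at hm ⊢
  exact fun g hg => hm (some g) (some_mem_extent_extRel.mpr hg)

lemma CA_extRel (A : Finset M) : CA (extRel I A1) A = insert (A ∩ A1) (CA I A) := by
  ext B
  simp [CA, Option.exists, eq_comm]

lemma mem_MCA_of_mem_MCA_extRel {A B : Finset M} (hB : B ∈ MCA (extRel I A1) A)
    (hBI : B ∈ CA I A) : B ∈ MCA I A := by
  simp only [MCA, Finset.mem_filter, CA_extRel, Finset.mem_insert] at hB ⊢
  exact ⟨hBI, fun C hC => hB.2 C (Or.inr hC)⟩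

lemma crucial_extRel_sdiff_subset (A2 : Finset M) :
    crucial (extRel I A1) A2 \ crucial I A2 ⊆ {A2 ∩ A1} ×ˢ ((A1 \ A2) ∪ (A2 \ A1)) := by
  rintro ⟨B, c⟩ hp
  obtain ⟨hnew, hold⟩ := Finset.mem_sdiff.mp hp
  obtain ⟨hB, hc⟩ := mem_crucial.mp hnew
  have hB_eq : B = A2 ∩ A1 := by
    have hBC : B ∈ insert (A2 ∩ A1) (CA I A2) :=
      CA_extRel (I := I) A2 ▸ (Finset.mem_filter.mp hB).1
    refine (Finset.mem_insert.mp hBC).resolve_right fun hBI => hold (mem_crucial.mpr ?_)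
    refine ⟨mem_MCA_of_mem_MCA_extRel hB hBI, ?_⟩
    simp only [Finset.mem_union, Finset.mem_sdiff] at hc ⊢
    exact hc.imp_left fun h => ⟨closure_extRel_subset B h.1, h.2⟩
  subst hB_eq
  have hcl : closure (extRel I A1) (A2 ∩ A1) ⊆ A1 := by
    simpa using closure_subset_intent
      (none_mem_extent_extRel.mpr Finset.inter_subset_right : (none : Option G) ∈ _)
  simp only [Finset.mem_product, Finset.mem_singleton, Finset.mem_union, Finset.mem_sdiff,
    Finset.mem_inter, not_and] at hc ⊢
  exact ⟨trivial, hc.imp (fun h => ⟨hcl h.1, h.2⟩) fun h => ⟨h.1, fun h1 => h.2 h.1 h1⟩⟩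

end ExtRel

/-- the number of `A2`-crucial implications of `K1` (the context obtained
by adjoining a new object with intent `A1`) that are not `A2`-crucial in `K` is at most
`|A1 \ A2| + |A2 \ A1|`. -/
theorem stmt9 [Fintype G] [Fintype M] [DecidableEq M] (I : G → M → Prop)
    [∀ g m, Decidable (I g m)] (A1 A2 : Finset M) :
    (crucial (extRel I A1) A2 \ crucial I A2).card ≤
      (A1 \ A2).card + (A2 \ A1).card :=
  calc (crucial (extRel I A1) A2 \ crucial I A2).card
      ≤ ({A2 ∩ A1} ×ˢ ((A1 \ A2) ∪ (A2 \ A1))).card :=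
        Finset.card_le_card (crucial_extRel_sdiff_subset A2)
    _ ≤ (A1 \ A2).card + (A2 \ A1).card := by
        rw [Finset.card_product, Finset.card_singleton, one_mul]
        exact Finset.card_union_le _ _

end FCA
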